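/- For a graph G, a vertex u, and a set A of vertices, the odd neighbourhood of A in the local complementation G⋆u satisfies: Odd_{G⋆u}(A) = Odd_G(A) Δ (N_G(u) ∩ A) if u ∉ Odd_G(A), and Odd_{G⋆u}(A) = Odd_G(A) Δ (N_G(u) \ A) if u ∈ Odd_G(A). -/

import Mathlib

open Set

/-- The three measurement planes. -/
inductive MPlane | XY | XZ | YZ
deriving DecidableEq

/-- The odd neighbourhood of a set `K`: vertices with an odd number of neighbours in `K`. -/
def oddNbhd {V : Type*} (G : SimpleGraph V) (K : Set V) : Set V :=
  {u | Odd (K ∩ G.neighborSet u).ncard}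

/-- `(g, prec)` is a gflow for the labelled open graph `(G, I, O, lam)`. -/
structure GFlow {V : Type*} (G : SimpleGraph V) (I O : Set V) (lam : V → MPlane)
    (g : V → Set V) (prec : V → V → Prop) : Prop where
  irrefl : ∀ v, ¬ prec v v
  trans : ∀ u v w, prec u v → prec v w → prec u w
  noInput : ∀ v, v ∉ O → g v ∩ I = ∅
  g1 : ∀ v, v ∉ O → ∀ w ∈ g v, w ≠ v → prec v w
  g2 : ∀ v, v ∉ O → ∀ w ∈ oddNbhd G (g v), w ≠ v → prec v w
  gXY : ∀ v, v ∉ O → lam v = MPlane.XY → v ∉ g v ∧ v ∈ oddNbhd G (g v)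
  gXZ : ∀ v, v ∉ O → lam v = MPlane.XZ → v ∈ g v ∧ v ∈ oddNbhd G (g v)
  gYZ : ∀ v, v ∉ O → lam v = MPlane.YZ → v ∈ g v ∧ v ∉ oddNbhd G (g v)

/-- Local complementation of `G` about the vertex `u`: complement the edges
among the neighbours of `u`. -/
def localComp {V : Type*} (G : SimpleGraph V) (u : V) : SimpleGraph V where
  Adj x y := x ≠ y ∧ Xor' (G.Adj x y) (G.Adj u x ∧ G.Adj u y)
  symm := by
    constructor
    rintro x y ⟨hxy, h⟩
    refine ⟨hxy.symm, ?_⟩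
    rw [G.adj_comm y x, and_comm]
    exact h
  loopless := by constructor; rintro x ⟨h, _⟩; exact h rfl

/-- The pivot of `G` about the edge `u ∼ v`. -/
def pivot {V : Type*} (G : SimpleGraph V) (u v : V) : SimpleGraph V :=
  localComp (localComp (localComp G u) v) u

/-!
Local complementation about `u` leaves the neighbourhood of a vertex `x ≁ u` unchanged and
replaces that of `x ∼ u` by `N(x) ∆ (N(u) \ {x})`. So for `x ∼ u` the parity of `|A ∩ N(x)|`
flips exactly when `|A ∩ N(u) \ {x}|` is odd, i.e. when exactly one of `u ∈ Odd(A)` and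
`x ∈ A` holds.
-/

open scoped symmDiff

namespace Set

variable {α : Type*} {s t : Set α}

theorem ncard_symmDiff_add_two_mul_ncard_inter (hs : s.Finite) (ht : t.Finite) :
    (s ∆ t).ncard + 2 * (s ∩ t).ncard = s.ncard + t.ncard := by
  rw [Set.symmDiff_def, ncard_union_eq disjoint_sdiff_sdiff hs.sdiff ht.sdiff,
    ← ncard_inter_add_ncard_sdiff_eq_ncard s t hs, ← ncard_inter_add_ncard_sdiff_eq_ncard t s ht,
    inter_comm t s]
  ring

theorem odd_ncard_symmDiff (hs : s.Finite) (ht : t.Finite) :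
    Odd (s ∆ t).ncard ↔ Xor (Odd s.ncard) (Odd t.ncard) := by
  have h := ncard_symmDiff_add_two_mul_ncard_inter hs ht
  simp only [xor_def, Nat.odd_iff]
  omega

theorem odd_ncard_sdiff_singleton (hs : s.Finite) (a : α) :
    Odd (s \ {a}).ncard ↔ Xor (Odd s.ncard) (a ∈ s) := by
  by_cases ha : a ∈ s
  · rw [← ncard_sdiff_singleton_add_one ha hs, Nat.odd_add_one]
    simp [ha, xor_iff_not_iff]
  · simp [sdiff_singleton_eq_self ha, ha, xor_def]

end Set

section LocalComplementation

variable {V : Type*} (G : SimpleGraph V) {u x y : V}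

theorem localComp_adj :
    (localComp G u).Adj x y ↔ x ≠ y ∧ Xor (G.Adj x y) (G.Adj u x ∧ G.Adj u y) :=
  Iff.rfl

theorem neighborSet_localComp_of_adj (h : G.Adj u x) :
    (localComp G u).neighborSet x = G.neighborSet x ∆ (G.neighborSet u \ {x}) := by
  ext y
  simp only [SimpleGraph.mem_neighborSet, localComp_adj, mem_symmDiff, mem_sdiff,
    mem_singleton_iff, h, true_and, xor_def]
  grind [SimpleGraph.Adj.ne, SimpleGraph.irrefl]

theorem neighborSet_localComp_of_not_adj (h : ¬G.Adj u x) :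
    (localComp G u).neighborSet x = G.neighborSet x := by
  ext y
  simp only [SimpleGraph.mem_neighborSet, localComp_adj, h, false_and, xor_def]
  grind [SimpleGraph.Adj.ne]

theorem mem_oddNbhd_localComp {A : Set V} (hA : A.Finite) :
    x ∈ oddNbhd (localComp G u) A ↔
      Xor (x ∈ oddNbhd G A) (G.Adj u x ∧ Xor (u ∈ oddNbhd G A) (x ∈ A)) := by
  by_cases h : G.Adj u x
  · simp only [oddNbhd, mem_ofPred_eq]
    rw [neighborSet_localComp_of_adj G h, inter_symmDiff_distrib_left,
      odd_ncard_symmDiff (hA.inter_of_left _) (hA.inter_of_left _), ← inter_sdiff_assoc,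
      odd_ncard_sdiff_singleton (hA.inter_of_left _)]
    simp [h]
  · simp [oddNbhd, neighborSet_localComp_of_not_adj G h, h, xor_def]

theorem oddNbhd_localComp_eq_symmDiff {A : Set V} (hA : A.Finite) :
    oddNbhd (localComp G u) A =
      oddNbhd G A ∆ {x | G.Adj u x ∧ Xor (u ∈ oddNbhd G A) (x ∈ A)} :=
  ext fun _ => mem_oddNbhd_localComp G hA

end LocalComplementation

/-- Lemma B.4 of Backens et al. -/
theorem oddNbhd_localComp {V : Type*} [Fintype V] (G : SimpleGraph V) (u : V) (A : Set V) :
    (u ∉ oddNbhd G A →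
      oddNbhd (localComp G u) A = symmDiff (oddNbhd G A) (G.neighborSet u ∩ A)) ∧
    (u ∈ oddNbhd G A →
      oddNbhd (localComp G u) A = symmDiff (oddNbhd G A) (G.neighborSet u \ A)) := by
  rw [oddNbhd_localComp_eq_symmDiff G A.toFinite]
  constructor <;> intro hu <;> congr 1 <;> ext x <;> simp [hu]
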